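/- Let C(L) = {z ∈ E : ‖z‖ < 1} \ ⋃{H(c,r) : c ∈ S, 0 < r < √2, Cap(c,r) ∩ L = ∅} be the hyperbolic convex hull of L in the ball model (the complement in the open unit ball of all hyperbolic half-spaces whose caps miss L). Then for every ε₀ ∈ (0,1), C(L) ∩ ⋃_{w∈Ω} H_w = ∅; equivalently, for every x ∈ Ω and every t ∈ (0,1) with t•x ∈ C(L), one has t ≤ f(x). In other words, the graph G separates the convex hull C(L) from Ω. (Lemma 1.4.) -/

import Mathlib

/-- The dome `H(w,r)`: the intersection of the open unit ball with the open ball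
centered at `(cos θ)⁻¹ • w` of radius `tan θ`, where `cos θ = 1 − r²/2`; its boundary
sphere meets the unit sphere orthogonally along `∂Cap(w,r)` (the hyperbolic
half-space over the cap `Cap(w,r)` in the ball model). -/
noncomputable def dome (n : ℕ) (w : EuclideanSpace ℝ (Fin (n + 1))) (r : ℝ) :
    Set (EuclideanSpace ℝ (Fin (n + 1))) :=
  Metric.ball 0 1 ∩
    Metric.ball ((1 - r ^ 2 / 2)⁻¹ • w)
      (Real.sqrt (1 - (1 - r ^ 2 / 2) ^ 2) / (1 - r ^ 2 / 2))

/-- The union `⋃_{w ∈ Ω} H_w` of the domes over the caps `B_w = Cap(w, ε₀·dist(w,L))`,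
`w ∈ Ω = S \ L`. -/
noncomputable def domeUnion (n : ℕ) (L : Set (EuclideanSpace ℝ (Fin (n + 1)))) (ε₀ : ℝ) :
    Set (EuclideanSpace ℝ (Fin (n + 1))) :=
  ⋃ w ∈ Metric.sphere (0 : EuclideanSpace ℝ (Fin (n + 1))) 1 \ L,
    dome n w (ε₀ * Metric.infDist w L)

/-- The graph function `f : Ω → (0,1]`,
`f(x) = inf({1} ∪ {t ∈ (0,1) : t•x ∈ ⋃_{w∈Ω} H_w})`; the invariant graph is
`G = {f(x)•x : x ∈ Ω} = ∂(⋃_{w∈Ω} H_w) ∩ B^{n+1}`. -/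
noncomputable def graphHeight (n : ℕ) (L : Set (EuclideanSpace ℝ (Fin (n + 1))))
    (ε₀ : ℝ) (x : EuclideanSpace ℝ (Fin (n + 1))) : ℝ :=
  sInf ({1} ∪ {t : ℝ | t ∈ Set.Ioo (0 : ℝ) 1 ∧ t • x ∈ domeUnion n L ε₀})

/-- The hyperbolic convex hull `C(L)` of `L ⊆ S` in the ball model: the complement
in the open unit ball of all hyperbolic half-spaces (domes) whose caps miss `L`. -/
noncomputable def hyperbolicConvexHull (n : ℕ) (L : Set (EuclideanSpace ℝ (Fin (n + 1)))) :
    Set (EuclideanSpace ℝ (Fin (n + 1))) :=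
  Metric.ball (0 : EuclideanSpace ℝ (Fin (n + 1))) 1 \
    ⋃ (c : EuclideanSpace ℝ (Fin (n + 1))) (r : ℝ)
      (_ : c ∈ Metric.sphere (0 : EuclideanSpace ℝ (Fin (n + 1))) 1 ∧
        0 < r ∧ r < Real.sqrt 2 ∧
        (Metric.sphere (0 : EuclideanSpace ℝ (Fin (n + 1))) 1 ∩ Metric.ball c r) ∩ L = ∅),
      dome n c r

/-
A dome `H(c, r)` whose cap misses `L` is one of the half-spaces removed from the open ball to
form `C(L)`. Since `ε₀ ≤ 1`, the cap `B_w` lies inside the ball of radius `dist(w, L)` around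
`w`, so it misses `L`, and `C(L)` is disjoint from every `H_w`. For the second statement, a ray
`a ↦ a • x` meets a dome where `κ (a + a⁻¹) < 2 ⟪x, w⟫` with `κ = 1 - r²/2`; as `a + a⁻¹`
decreases on `(0, 1]`, once the ray has entered `⋃ H_w` at height `s` it stays there up to the
sphere, so a point `t • x` of `C(L)` cannot lie above any such `s`.
-/

open Metric RealInnerProductSpace

lemma add_inv_le_add_inv_of_le {s t : ℝ} (hs : 0 < s) (hst : s ≤ t) (ht : t ≤ 1) :
    t + t⁻¹ ≤ s + s⁻¹ := by
  have ht0 : 0 < t := hs.trans_le hst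
  have hdiff : (s + s⁻¹) - (t + t⁻¹) = (t - s) * (1 - s * t) / (s * t) := by
    field_simp
    ring
  rw [← sub_nonneg, hdiff]
  exact div_nonneg (mul_nonneg (by linarith) (by nlinarith)) (by positivity)

section InnerProductSpace

variable {E : Type*} [NormedAddCommGroup E] [InnerProductSpace ℝ E]

lemma smul_mem_ball_inv_smul_iff {x w : E} (hx : ‖x‖ = 1) (hw : ‖w‖ = 1) {κ a : ℝ}
    (hκ : κ ∈ Set.Ioo 0 1) (ha : 0 < a) :
    a • x ∈ ball (κ⁻¹ • w) (√(1 - κ ^ 2) / κ) ↔ κ * (a + a⁻¹) < 2 * ⟪x, w⟫ := by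
  obtain ⟨hκ0, hκ1⟩ := hκ
  have hrad : 0 ≤ √(1 - κ ^ 2) / κ := by positivity
  rw [mem_ball, dist_eq_norm, ← pow_lt_pow_iff_left₀ (norm_nonneg _) hrad two_ne_zero,
    norm_sub_sq_real, norm_smul, norm_smul, real_inner_smul_left, real_inner_smul_right, hx, hw,
    div_pow, Real.sq_sqrt (by nlinarith), Real.norm_of_nonneg ha.le,
    Real.norm_of_nonneg (inv_nonneg.2 hκ0.le)]
  have hdiff : (1 - κ ^ 2) / κ ^ 2 - ((a * 1) ^ 2 - 2 * (a * (κ⁻¹ * ⟪x, w⟫)) + (κ⁻¹ * 1) ^ 2)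
      = a / κ * (2 * ⟪x, w⟫ - κ * (a + a⁻¹)) := by
    field_simp
    ring
  rw [← sub_pos, hdiff, mul_pos_iff_of_pos_left (by positivity), sub_pos]

end InnerProductSpace

section Dome

variable {n : ℕ}

lemma dome_eq_empty_of_notMem_Ioo (w : EuclideanSpace ℝ (Fin (n + 1))) {r : ℝ}
    (hr : 1 - r ^ 2 / 2 ∉ Set.Ioo 0 1) : dome n w r = ∅ := by
  have hrad : √(1 - (1 - r ^ 2 / 2) ^ 2) / (1 - r ^ 2 / 2) ≤ 0 := by
    rcases le_or_gt (1 - r ^ 2 / 2) 0 with hκ | hκ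
    · exact div_nonpos_of_nonneg_of_nonpos (Real.sqrt_nonneg _) hκ
    · have hκ1 : 1 ≤ 1 - r ^ 2 / 2 := not_lt.1 fun hκ1 ↦ hr ⟨hκ, hκ1⟩
      rw [Real.sqrt_eq_zero'.2 (by nlinarith), zero_div]
  rw [dome, ball_eq_empty.2 hrad, Set.inter_empty]

lemma smul_mem_dome_of_le {x w : EuclideanSpace ℝ (Fin (n + 1))} (hx : ‖x‖ = 1) (hw : ‖w‖ = 1)
    {r s t : ℝ} (hs : 0 < s) (hst : s ≤ t) (ht : t < 1) (h : s • x ∈ dome n w r) :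
    t • x ∈ dome n w r := by
  by_cases hκ : 1 - r ^ 2 / 2 ∈ Set.Ioo 0 1
  · have ht0 : 0 < t := hs.trans_le hst
    refine ⟨by simpa [norm_smul, hx, abs_of_pos ht0] using ht, ?_⟩
    rw [dome, Set.mem_inter_iff, smul_mem_ball_inv_smul_iff hx hw hκ hs] at h
    rw [smul_mem_ball_inv_smul_iff hx hw hκ ht0]
    calc (1 - r ^ 2 / 2) * (t + t⁻¹) ≤ (1 - r ^ 2 / 2) * (s + s⁻¹) :=
          mul_le_mul_of_nonneg_left (add_inv_le_add_inv_of_le hs hst ht.le) hκ.1.le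
      _ < _ := h.2
  · rw [dome_eq_empty_of_notMem_Ioo w hκ] at h
    exact h.elim

lemma disjoint_hyperbolicConvexHull_dome (L : Set (EuclideanSpace ℝ (Fin (n + 1))))
    {c : EuclideanSpace ℝ (Fin (n + 1))} (hc : c ∈ sphere 0 1) {r : ℝ} (hr : 0 ≤ r)
    (hcap : (sphere 0 1 ∩ ball c r) ∩ L = ∅) :
    Disjoint (hyperbolicConvexHull n L) (dome n c r) := by
  by_cases hκ : 1 - r ^ 2 / 2 ∈ Set.Ioo 0 1
  · have hr0 : 0 < r := hr.lt_of_ne (by rintro rfl; norm_num at hκ)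
    have hr2 : r < √2 := Real.lt_sqrt_of_sq_lt (by linarith [hκ.1])
    refine Set.disjoint_left.2 fun z hz hzc ↦ hz.2 ?_
    exact Set.mem_iUnion₂.2 ⟨c, r, Set.mem_iUnion.2 ⟨⟨hc, hr0, hr2, hcap⟩, hzc⟩⟩
  · simp [dome_eq_empty_of_notMem_Ioo c hκ]

lemma disjoint_hyperbolicConvexHull_domeUnion (L : Set (EuclideanSpace ℝ (Fin (n + 1))))
    {ε₀ : ℝ} (hε0 : 0 ≤ ε₀) (hε1 : ε₀ ≤ 1) :
    Disjoint (hyperbolicConvexHull n L) (domeUnion n L ε₀) := by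
  refine Set.disjoint_iUnion₂_right.2 fun w hw ↦
    disjoint_hyperbolicConvexHull_dome L hw.1 (mul_nonneg hε0 infDist_nonneg) ?_
  refine Set.disjoint_iff_inter_eq_empty.1 (Disjoint.mono_left Set.inter_subset_right ?_)
  exact disjoint_ball_infDist.mono_left
    (ball_subset_ball (mul_le_of_le_one_left infDist_nonneg hε1))

lemma smul_mem_domeUnion_of_le (L : Set (EuclideanSpace ℝ (Fin (n + 1)))) (ε₀ : ℝ)
    {x : EuclideanSpace ℝ (Fin (n + 1))} (hx : ‖x‖ = 1) {s t : ℝ} (hs : 0 < s) (hst : s ≤ t)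
    (ht : t < 1) (h : s • x ∈ domeUnion n L ε₀) : t • x ∈ domeUnion n L ε₀ := by
  obtain ⟨w, hw, hsw⟩ := Set.mem_iUnion₂.1 h
  exact Set.mem_iUnion₂_of_mem hw
    (smul_mem_dome_of_le hx (mem_sphere_zero_iff_norm.1 hw.1) hs hst ht hsw)

end Dome

theorem convex_hull_below_graph_general (n : ℕ)
    (L : Set (EuclideanSpace ℝ (Fin (n + 1)))) :
    ∀ ε₀ ∈ Set.Ioo (0 : ℝ) 1,
      hyperbolicConvexHull n L ∩ domeUnion n L ε₀ = ∅ ∧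
      ∀ x ∈ Metric.sphere (0 : EuclideanSpace ℝ (Fin (n + 1))) 1 \ L,
        ∀ t ∈ Set.Ioo (0 : ℝ) 1,
          t • x ∈ hyperbolicConvexHull n L → t ≤ graphHeight n L ε₀ x := by
  rintro ε₀ ⟨hε0, hε1⟩
  have hdisj := disjoint_hyperbolicConvexHull_domeUnion L hε0.le hε1.le
  refine ⟨hdisj.inter_eq, ?_⟩
  rintro x ⟨hx, -⟩ t ⟨-, ht1⟩ hthull
  refine le_csInf ⟨1, Or.inl rfl⟩ ?_
  rintro s (rfl | ⟨⟨hs0, -⟩, hs⟩)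
  · exact ht1.le
  · by_contra! hst
    exact Set.disjoint_left.1 hdisj hthull
      (smul_mem_domeUnion_of_le L ε₀ (mem_sphere_zero_iff_norm.1 hx) hs0 hst.le ht1 hs)

/-- Lemma 1.4: the invariant graph `G` separates the hyperbolic convex hull `C(L)`
from `Ω`: for every `ε₀ ∈ (0,1)`, `C(L)` is disjoint from `⋃_{w∈Ω} H_w`;
equivalently, for every `x ∈ Ω` and `t ∈ (0,1)` with `t•x ∈ C(L)`, one has
`t ≤ f(x)`. -/
theorem convex_hull_below_graph (n : ℕ) (hn : 1 ≤ n)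
    (L : Set (EuclideanSpace ℝ (Fin (n + 1))))
    (hLne : L.Nonempty) (hLclosed : IsClosed L)
    (hLsub : L ⊆ Metric.sphere (0 : EuclideanSpace ℝ (Fin (n + 1))) 1)
    (hLproper : L ≠ Metric.sphere (0 : EuclideanSpace ℝ (Fin (n + 1))) 1) :
    ∀ ε₀ ∈ Set.Ioo (0 : ℝ) 1,
      hyperbolicConvexHull n L ∩ domeUnion n L ε₀ = ∅ ∧
      ∀ x ∈ Metric.sphere (0 : EuclideanSpace ℝ (Fin (n + 1))) 1 \ L,
        ∀ t ∈ Set.Ioo (0 : ℝ) 1,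
          t • x ∈ hyperbolicConvexHull n L → t ≤ graphHeight n L ε₀ x :=
  convex_hull_below_graph_general n L
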